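/- Let H be a complete real inner product space, E : H → ℝ with E(x) ≥ 0 for all x ∈ H, let 0 < T < ∞, and let γ : ℝ → H solve the gradient flow of E on [0,T), with t ↦ ∇E(γ(t)) continuous on [0,T). Then γ has a limit at the final time: there exists L ∈ H such that γ(t) → L as t → T from the left. -/

import Mathlib

/-!
Along the flow the energy decreases at rate `‖∇E‖²`, so `∫ₛᵗ ‖∇E(γ)‖² = E(γ s) - E(γ t)`.
Combined with `‖γ t - γ s‖ ≤ ∫ₛᵗ ‖∇E(γ)‖` and `‖v‖ ≤ (1 + ‖v‖²)/2`, this gives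
`‖γ t - γ s‖ ≤ ψ s - ψ t` for the function `ψ t = (E(γ t) - t)/2`, which is bounded below on
`[0, T)` because `E ≥ 0`. Hence `ψ` is antitone and converges at `T⁻`, so `γ` is Cauchy there
and converges by completeness.
-/

open Set Filter Topology

def IsGradientFlowOn {H : Type*} [NormedAddCommGroup H] [InnerProductSpace ℝ H] [CompleteSpace H]
    (E : H → ℝ) (γ g : ℝ → H) (S : Set ℝ) : Prop :=
  ∀ u ∈ S, HasGradientAt E (g u) (γ u) ∧ HasDerivAt γ (-g u) u

theorem HasGradientAt.hasDerivAt_comp {H : Type*} [NormedAddCommGroup H] [InnerProductSpace ℝ H]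
    [CompleteSpace H] {f : H → ℝ} {f' v : H} {γ : ℝ → H} {t : ℝ} (hf : HasGradientAt f f' (γ t))
    (hγ : HasDerivAt γ v t) : HasDerivAt (fun u => f (γ u)) (inner ℝ f' v) t :=
  hf.hasFDerivAt.comp_hasDerivAt t hγ

theorem Cauchy.map_of_dist_le {α β X : Type*} [PseudoMetricSpace β] [PseudoMetricSpace X]
    {l : Filter α} {f : α → X} {φ : α → β} (hφ : Cauchy (map φ l))
    (h : ∀ᶠ p in l ×ˢ l, dist (f p.1) (f p.2) ≤ dist (φ p.1) (φ p.2)) : Cauchy (map f l) := by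
  rw [cauchy_map_iff] at hφ ⊢
  refine ⟨hφ.1, Metric.uniformity_basis_dist.tendsto_right_iff.2 fun ε hε => ?_⟩
  filter_upwards [Metric.uniformity_basis_dist.tendsto_right_iff.1 hφ.2 ε hε, h] with p hp hle
  exact hle.trans_lt hp

theorem norm_sub_le_integral_norm_of_hasDerivAt {F : Type*} [NormedAddCommGroup F]
    [NormedSpace ℝ F] [CompleteSpace F] {γ γ' : ℝ → F} {s t : ℝ} (hst : s ≤ t)
    (hγ : ∀ u ∈ Icc s t, HasDerivAt γ (γ' u) u) (hγ' : ContinuousOn γ' (Icc s t)) :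
    ‖γ t - γ s‖ ≤ ∫ u in s..t, ‖γ' u‖ := by
  rw [← intervalIntegral.integral_eq_sub_of_hasDerivAt (by rwa [uIcc_of_le hst])
    (hγ'.intervalIntegrable_of_Icc hst)]
  exact intervalIntegral.norm_integral_le_integral_norm hst

theorem exists_tendsto_nhdsLT_of_dist_le_sub {X : Type*} [PseudoMetricSpace X] [CompleteSpace X]
    {a b : ℝ} (hab : a < b) {γ : ℝ → X} {ψ : ℝ → ℝ} (hψ : BddBelow (ψ '' Ico a b))
    (h : ∀ s t, a ≤ s → s ≤ t → t < b → dist (γ s) (γ t) ≤ ψ s - ψ t) :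
    ∃ L, Tendsto γ (𝓝[<] b) (𝓝 L) := by
  have hanti : AntitoneOn ψ (Ioo a b) := fun s hs t ht hst =>
    sub_nonneg.1 <| dist_nonneg.trans (h s t hs.1.le hst ht.2)
  have hψlim := hanti.tendsto_nhdsWithin_Ioo_left (nonempty_Ioo.2 hab)
    (hψ.mono (image_mono Ioo_subset_Ico_self))
  have hdist : ∀ᶠ p in 𝓝[<] b ×ˢ 𝓝[<] b, dist (γ p.1) (γ p.2) ≤ dist (ψ p.1) (ψ p.2) := by
    filter_upwards [prod_mem_prod (Ioo_mem_nhdsLT hab) (Ioo_mem_nhdsLT hab)]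
    rintro ⟨s, t⟩ ⟨hs, ht⟩
    rcases le_total s t with hst | hts
    · exact (h s t hs.1.le hst ht.2).trans (Real.dist_eq _ _ ▸ le_abs_self _)
    · rw [dist_comm, dist_comm (ψ s)]
      exact (h t s ht.1.le hts hs.2).trans (Real.dist_eq _ _ ▸ le_abs_self _)
  exact CompleteSpace.complete (hψlim.cauchy_map.map_of_dist_le hdist)

namespace IsGradientFlowOn

variable {H : Type*} [NormedAddCommGroup H] [InnerProductSpace ℝ H] [CompleteSpace H]
  {E : H → ℝ} {γ g : ℝ → H} {S : Set ℝ} {s t : ℝ}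

theorem mono {S' : Set ℝ} (hflow : IsGradientFlowOn E γ g S) (hS' : S' ⊆ S) :
    IsGradientFlowOn E γ g S' :=
  fun u hu => hflow u (hS' hu)

theorem hasDerivAt_energy (hflow : IsGradientFlowOn E γ g S) (ht : t ∈ S) :
    HasDerivAt (fun u => E (γ u)) (-‖g t‖ ^ 2) t := by
  simpa [inner_neg_right, real_inner_self_eq_norm_sq] using
    (hflow t ht).1.hasDerivAt_comp (hflow t ht).2

theorem energy_sub_eq_integral (hflow : IsGradientFlowOn E γ g (Icc s t)) (hst : s ≤ t)
    (hg : ContinuousOn g (Icc s t)) :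
    E (γ s) - E (γ t) = ∫ u in s..t, ‖g u‖ ^ 2 := by
  have hFTC := intervalIntegral.integral_eq_sub_of_hasDerivAt
    (fun u hu => hflow.hasDerivAt_energy (by rwa [uIcc_of_le hst] at hu))
    ((hg.norm.pow 2).neg.intervalIntegrable_of_Icc hst)
  rw [intervalIntegral.integral_neg] at hFTC
  linarith

theorem norm_sub_le (hflow : IsGradientFlowOn E γ g (Icc s t)) (hst : s ≤ t)
    (hg : ContinuousOn g (Icc s t)) :
    ‖γ t - γ s‖ ≤ (t - s) / 2 + (E (γ s) - E (γ t)) / 2 := by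
  have hg2 : IntervalIntegrable (fun u => ‖g u‖ ^ 2) MeasureTheory.volume s t :=
    (hg.norm.pow 2).intervalIntegrable_of_Icc hst
  calc ‖γ t - γ s‖ ≤ ∫ u in s..t, ‖-g u‖ :=
        norm_sub_le_integral_norm_of_hasDerivAt hst (fun u hu => (hflow u hu).2) hg.neg
    _ ≤ ∫ u in s..t, (1 + ‖g u‖ ^ 2) / 2 := by
        refine intervalIntegral.integral_mono_on hst (hg.neg.norm.intervalIntegrable_of_Icc hst)
          ((intervalIntegrable_const.add hg2).div_const 2) fun u _ => ?_
        nlinarith [norm_neg (g u), sq_nonneg (‖g u‖ - 1)]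
    _ = (t - s) / 2 + (E (γ s) - E (γ t)) / 2 := by
        rw [intervalIntegral.integral_div,
          intervalIntegral.integral_add intervalIntegrable_const hg2,
          hflow.energy_sub_eq_integral hst hg, intervalIntegral.integral_const, smul_eq_mul,
          mul_one, add_div]

end IsGradientFlowOn

/-- No blowup at the maximal time: a gradient flow trajectory of a nonnegative
energy in a Hilbert space has a limit as `t → T⁻`. -/
theorem gradient_flow_limit_at_final_time
    {H : Type*} [NormedAddCommGroup H] [InnerProductSpace ℝ H] [CompleteSpace H]
    (E : H → ℝ) (hE : ∀ x, 0 ≤ E x) (T : ℝ) (hT : 0 < T) (γ : ℝ → H) (g : ℝ → H)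
    (hflow : ∀ t ∈ Ico (0 : ℝ) T,
      HasGradientAt E (g t) (γ t) ∧ HasDerivAt γ (-(g t)) t)
    (hcont : ContinuousOn g (Ico (0 : ℝ) T)) :
    ∃ L : H, Tendsto γ (𝓝[<] T) (𝓝 L) := by
  have hflow : IsGradientFlowOn E γ g (Ico 0 T) := hflow
  have hψ : BddBelow ((fun t => (E (γ t) - t) / 2) '' Ico 0 T) := by
    refine ⟨-T / 2, ?_⟩
    rintro _ ⟨u, hu, rfl⟩
    linarith [hE (γ u), hu.2]
  refine exists_tendsto_nhdsLT_of_dist_le_sub hT hψ fun s t hs hst htT => ?_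
  have hsub : Icc s t ⊆ Ico 0 T := Icc_subset_Ico hs htT
  rw [dist_comm, dist_eq_norm]
  linarith [(hflow.mono hsub).norm_sub_le hst (hcont.mono hsub)]
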